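/- Let U ∈ St(r,n) and let 0 < δ < 2. Then the set 𝒩_δ(U) := {V ∈ St(r,n) : ‖U − V‖ < δ}, where ‖·‖ is the ℓ²-operator norm, is path-connected. -/

import Mathlib

open Matrix
open scoped Matrix.Norms.L2Operator

/-!
Join `U` to `V` by the polar retraction `X_t = W_t (W_tᵀ W_t)^{-1/2}` of the segment
`W_t = (1 - t) U + t V`. The polar factor of `W` is a nearest point of the Stiefel manifold:
`‖W - X‖ = max_i |σ_i - 1|` over the singular values `σ_i = ‖W c_i‖` of `W`, and
`|‖W c‖ - ‖Y c‖| ≤ ‖W - Y‖` for every isometry `Y` and unit vector `c`.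
Taking `Y = V` gives `‖U - X_t‖ ≤ ‖U - W_t‖ + ‖W_t - V‖ = ‖U - V‖`.
The segment never leaves the full-rank matrices, since `W_t` lies within `‖U - V‖ / 2 < 1`
of `U` or of `V`.
-/

namespace Matrix

variable {m k R : Type*} [Fintype k]

section DotProduct

variable [Fintype m]

theorem dotProduct_mulVec_mulVec [CommSemiring R] (A B : Matrix m k R) (x y : k → R) :
    (A *ᵥ x) ⬝ᵥ (B *ᵥ y) = x ⬝ᵥ ((Aᵀ * B) *ᵥ y) := by
  rw [← mulVec_mulVec, dotProduct_mulVec x, vecMul_transpose]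

theorem norm_toLp_mulVec_sq (A : Matrix m k ℝ) (x : k → ℝ) :
    ‖WithLp.toLp 2 (A *ᵥ x)‖ ^ 2 = x ⬝ᵥ ((Aᵀ * A) *ᵥ x) := by
  rw [← real_inner_self_eq_norm_sq, EuclideanSpace.inner_toLp_toLp, star_trivial,
    dotProduct_mulVec_mulVec]

end DotProduct

variable [DecidableEq k]

def conjDiagonal [CommSemiring R] (O : Matrix k k R) (v : k → R) : Matrix k k R :=
  O * diagonal v * Oᵀ

section ConjDiagonal

variable [CommRing R] {O : Matrix k k R}

theorem conjDiagonal_mul_conjDiagonal (hO : Oᵀ * O = 1) (v w : k → R) :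
    conjDiagonal O v * conjDiagonal O w = conjDiagonal O (v * w) := by
  simp only [conjDiagonal, Matrix.mul_assoc, ← Matrix.mul_assoc Oᵀ, hO, Matrix.one_mul]
  rw [← Matrix.mul_assoc (diagonal v), diagonal_mul_diagonal]
  rfl

theorem transpose_mul_conjDiagonal_mul (hO : Oᵀ * O = 1) (v : k → R) :
    Oᵀ * conjDiagonal O v * O = diagonal v := by
  simp only [conjDiagonal, Matrix.mul_assoc, hO, Matrix.mul_one, ← Matrix.mul_assoc Oᵀ,
    Matrix.one_mul]

theorem conjDiagonal_add (v w : k → R) :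
    conjDiagonal O (v + w) = conjDiagonal O v + conjDiagonal O w := by
  rw [conjDiagonal, Pi.add_def, ← diagonal_add, Matrix.mul_add, Matrix.add_mul]
  rfl

theorem conjDiagonal_smul (a : R) (v : k → R) :
    conjDiagonal O (a • v) = a • conjDiagonal O v := by
  rw [conjDiagonal, diagonal_smul, Matrix.mul_smul, Matrix.smul_mul]
  rfl

theorem transpose_conjDiagonal (v : k → R) : (conjDiagonal O v)ᵀ = conjDiagonal O v := by
  simp only [conjDiagonal, transpose_mul, diagonal_transpose, transpose_transpose,
    Matrix.mul_assoc]

theorem conjDiagonal_one (hO : Oᵀ * O = 1) : conjDiagonal O 1 = 1 := by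
  rw [conjDiagonal, Pi.one_def, diagonal_one, Matrix.mul_one, mul_eq_one_comm.mp hO]

theorem conjDiagonal_sub (v w : k → R) :
    conjDiagonal O (v - w) = conjDiagonal O v - conjDiagonal O w := by
  rw [conjDiagonal, Pi.sub_def, ← diagonal_sub, Matrix.mul_sub, Matrix.sub_mul]
  rfl

end ConjDiagonal

theorem IsHermitian.exists_eq_conjDiagonal {S : Matrix k k ℝ} (hS : S.IsHermitian) :
    ∃ O : Matrix k k ℝ, Oᵀ * O = 1 ∧ S = conjDiagonal O hS.eigenvalues := by
  refine ⟨hS.eigenvectorUnitary, ?_, ?_⟩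
  · simpa [star_eq_conjTranspose] using Unitary.coe_star_mul_self hS.eigenvectorUnitary
  · simpa [conjDiagonal, Unitary.conjStarAlgAut_apply, star_eq_conjTranspose,
      RCLike.ofReal_real_eq_id] using hS.spectral_theorem

/-- `W (Wᵀ W)^{-1/2}`, given the spectral decomposition `Wᵀ W = O diag(q) Oᵀ`. -/
noncomputable def polarFactor (W : Matrix m k ℝ) (O : Matrix k k ℝ) (q : k → ℝ) :
    Matrix m k ℝ :=
  W * conjDiagonal O fun i => (√(q i))⁻¹

theorem polarFactor_one {O : Matrix k k ℝ} (hO : Oᵀ * O = 1) (W : Matrix m k ℝ) :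
    polarFactor W O 1 = W := by
  simp [polarFactor, ← Pi.one_def, conjDiagonal_one hO]

theorem continuous_polarFactor {X : Type*} [TopologicalSpace X] {W : X → Matrix m k ℝ}
    {q : X → k → ℝ} (O : Matrix k k ℝ) (hW : Continuous W) (hq : Continuous q)
    (hpos : ∀ x i, 0 < q x i) : Continuous fun x => polarFactor (W x) O (q x) := by
  have hinv : Continuous fun x i => (√(q x i))⁻¹ := continuous_pi fun i =>
    Continuous.inv₀ (by fun_prop) fun x => (Real.sqrt_pos.mpr (hpos x i)).ne'
  exact hW.matrix_mul
    ((continuous_const.matrix_mul hinv.matrix_diagonal).matrix_mul continuous_const)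

variable [Fintype m]

theorem norm_toLp_mulVec_of_transpose_mul_self {X : Matrix m k ℝ} (hX : Xᵀ * X = 1)
    (x : k → ℝ) : ‖WithLp.toLp 2 (X *ᵥ x)‖ = ‖WithLp.toLp 2 x‖ := by
  rw [← sq_eq_sq₀ (norm_nonneg _) (norm_nonneg _), norm_toLp_mulVec_sq, hX, one_mulVec,
    ← real_inner_self_eq_norm_sq, EuclideanSpace.inner_toLp_toLp, star_trivial]

theorem l2_opNorm_le_one_of_transpose_mul_self {X : Matrix m k ℝ} (hX : Xᵀ * X = 1) :
    ‖X‖ ≤ 1 := by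
  rw [l2_opNorm_def]
  refine ContinuousLinearMap.opNorm_le_bound _ zero_le_one fun x => ?_
  rw [one_mul]
  exact (norm_toLp_mulVec_of_transpose_mul_self hX x.ofLp).le

theorem l2_opNorm_conjDiagonal_le {O : Matrix k k ℝ} (hO : Oᵀ * O = 1) (v : k → ℝ) :
    ‖conjDiagonal O v‖ ≤ ‖v‖ := by
  have hOt : Oᵀᵀ * Oᵀ = 1 := by rw [transpose_transpose, mul_eq_one_comm.mp hO]
  calc ‖conjDiagonal O v‖ ≤ ‖O‖ * ‖diagonal v‖ * ‖Oᵀ‖ := by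
        grw [conjDiagonal, l2_opNorm_mul, l2_opNorm_mul]
    _ ≤ 1 * ‖v‖ * 1 := by
        grw [l2_opNorm_le_one_of_transpose_mul_self hO,
          l2_opNorm_le_one_of_transpose_mul_self hOt, l2_opNorm_diagonal]
    _ = ‖v‖ := by ring

section PolarFactor

variable {W : Matrix m k ℝ} {O : Matrix k k ℝ} {q : k → ℝ}

theorem sqrt_eq_norm_mulVec (hO : Oᵀ * O = 1) (hW : Wᵀ * W = conjDiagonal O q) (i : k) :
    √(q i) = ‖WithLp.toLp 2 (W *ᵥ (O *ᵥ Pi.single i 1))‖ := by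
  rw [← Real.sqrt_sq (norm_nonneg _), norm_toLp_mulVec_sq, hW, dotProduct_mulVec_mulVec,
    mulVec_mulVec, transpose_mul_conjDiagonal_mul hO]
  simp

theorem abs_sqrt_sub_one_le (hO : Oᵀ * O = 1) (hW : Wᵀ * W = conjDiagonal O q)
    {Y : Matrix m k ℝ} (hY : Yᵀ * Y = 1) (i : k) : |√(q i) - 1| ≤ ‖W - Y‖ := by
  set c := O *ᵥ Pi.single i 1
  have hc : ‖WithLp.toLp 2 c‖ = 1 := by
    rw [norm_toLp_mulVec_of_transpose_mul_self hO]
    simp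
  calc |√(q i) - 1|
      = |‖WithLp.toLp 2 (W *ᵥ c)‖ - ‖WithLp.toLp 2 (Y *ᵥ c)‖| := by
        rw [sqrt_eq_norm_mulVec hO hW, norm_toLp_mulVec_of_transpose_mul_self hY, hc]
    _ ≤ ‖WithLp.toLp 2 ((W - Y) *ᵥ c)‖ := by
        rw [sub_mulVec, WithLp.toLp_sub]
        exact abs_norm_sub_norm_le _ _
    _ ≤ ‖W - Y‖ * ‖WithLp.toLp 2 c‖ := (W - Y).l2_opNorm_mulVec (WithLp.toLp 2 c)
    _ = ‖W - Y‖ := by rw [hc, mul_one]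

theorem pos_of_norm_sub_lt_one (hO : Oᵀ * O = 1) (hW : Wᵀ * W = conjDiagonal O q)
    {Y : Matrix m k ℝ} (hY : Yᵀ * Y = 1) (hWY : ‖W - Y‖ < 1) (i : k) : 0 < q i := by
  have := abs_sqrt_sub_one_le hO hW hY i
  exact Real.sqrt_pos.mp (by linarith [neg_abs_le (√(q i) - 1)])

theorem transpose_mul_polarFactor (hO : Oᵀ * O = 1) (hq : ∀ i, 0 < q i)
    (hW : Wᵀ * W = conjDiagonal O q) : (polarFactor W O q)ᵀ * polarFactor W O q = 1 := by
  rw [polarFactor, transpose_mul, transpose_conjDiagonal, Matrix.mul_assoc,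
    ← Matrix.mul_assoc Wᵀ, hW, conjDiagonal_mul_conjDiagonal hO,
    conjDiagonal_mul_conjDiagonal hO, ← conjDiagonal_one hO]
  congr 1
  funext i
  have := Real.mul_self_sqrt (hq i).le
  have := (Real.sqrt_pos.mpr (hq i)).ne'
  simp only [Pi.mul_apply, Pi.one_apply]
  field_simp
  linarith

theorem norm_sub_polarFactor_le (hO : Oᵀ * O = 1) (hq : ∀ i, 0 < q i)
    (hW : Wᵀ * W = conjDiagonal O q) {Y : Matrix m k ℝ} (hY : Yᵀ * Y = 1) :
    ‖W - polarFactor W O q‖ ≤ ‖W - Y‖ := by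
  have hPW : polarFactor W O q * conjDiagonal O (fun i => √(q i)) = W := by
    rw [polarFactor, Matrix.mul_assoc, conjDiagonal_mul_conjDiagonal hO]
    convert Matrix.mul_one W
    convert conjDiagonal_one hO
    funext i
    exact inv_mul_cancel₀ (Real.sqrt_pos.mpr (hq i)).ne'
  set P := polarFactor W O q
  have hWP : W - P = P * conjDiagonal O (fun i => √(q i) - 1) := by
    calc W - P = P * conjDiagonal O (fun i => √(q i)) - P * conjDiagonal O 1 := by
          rw [hPW, conjDiagonal_one hO, Matrix.mul_one]
      _ = P * conjDiagonal O (fun i => √(q i) - 1) := by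
          rw [← Matrix.mul_sub, ← conjDiagonal_sub]
          rfl
  calc ‖W - P‖ ≤ ‖P‖ * ‖conjDiagonal O (fun i => √(q i) - 1)‖ := by
        rw [hWP]; exact l2_opNorm_mul _ _
    _ ≤ 1 * ‖fun i => √(q i) - 1‖ := by
        gcongr
        · exact l2_opNorm_le_one_of_transpose_mul_self (transpose_mul_polarFactor hO hq hW)
        · exact l2_opNorm_conjDiagonal_le hO _
    _ ≤ ‖W - Y‖ := by
        rw [one_mul, pi_norm_le_iff_of_nonneg (norm_nonneg _)]
        exact fun i => (Real.norm_eq_abs _).trans_le (abs_sqrt_sub_one_le hO hW hY i)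

end PolarFactor

theorem transpose_mul_self_lineMap {U V : Matrix m k ℝ} (hU : Uᵀ * U = 1) (hV : Vᵀ * V = 1)
    {O : Matrix k k ℝ} (hO : Oᵀ * O = 1) {d : k → ℝ}
    (hd : Uᵀ * V + Vᵀ * U = conjDiagonal O d) (t : ℝ) :
    (AffineMap.lineMap U V t)ᵀ * AffineMap.lineMap U V t =
      conjDiagonal O fun i => (1 - t) ^ 2 + t ^ 2 + (1 - t) * t * d i := by
  have hq : (fun i => (1 - t) ^ 2 + t ^ 2 + (1 - t) * t * d i) =
      ((1 - t) ^ 2 + t ^ 2) • 1 + ((1 - t) * t) • d := by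
    funext i; simp
  rw [hq, conjDiagonal_add, conjDiagonal_smul, conjDiagonal_smul, conjDiagonal_one hO, ← hd,
    AffineMap.lineMap_apply_module]
  simp only [transpose_add, transpose_smul, Matrix.add_mul, Matrix.mul_add, Matrix.smul_mul,
    Matrix.mul_smul, hU, hV]
  module

theorem joinedIn_stiefel_closedBall {U V : Matrix m k ℝ} (hU : Uᵀ * U = 1) (hV : Vᵀ * V = 1)
    (hUV : ‖U - V‖ < 2) : JoinedIn {X | Xᵀ * X = 1 ∧ ‖U - X‖ ≤ ‖U - V‖} U V := by
  have hS : (Uᵀ * V + Vᵀ * U).IsHermitian := by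
    simp only [IsHermitian, conjTranspose_eq_transpose_of_trivial, transpose_add, transpose_mul,
      transpose_transpose, add_comm]
  obtain ⟨O, hO, hd⟩ := hS.exists_eq_conjDiagonal
  set W : ℝ → Matrix m k ℝ := fun t => AffineMap.lineMap U V t
  set q : ℝ → k → ℝ := fun t i => (1 - t) ^ 2 + t ^ 2 + (1 - t) * t * hS.eigenvalues i
  have hW (t : ℝ) : (W t)ᵀ * W t = conjDiagonal O (q t) :=
    transpose_mul_self_lineMap hU hV hO hd t
  have hdist : ∀ t ∈ Set.Icc (0 : ℝ) 1,
      dist (W t) U = t * dist U V ∧ dist (W t) V = (1 - t) * dist U V := by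
    rintro t ⟨ht0, ht1⟩
    rw [dist_lineMap_left, dist_lineMap_right, Real.norm_of_nonneg ht0,
      Real.norm_of_nonneg (sub_nonneg.mpr ht1)]
    exact ⟨rfl, rfl⟩
  rw [← dist_eq_norm] at hUV
  have hq : ∀ t ∈ Set.Icc (0 : ℝ) 1, ∀ i, 0 < q t i := by
    intro t ht
    rcases le_total t (1 / 2) with h | h
    · refine pos_of_norm_sub_lt_one hO (hW t) hU ?_
      rw [← dist_eq_norm, (hdist t ht).1]; nlinarith [dist_nonneg (x := U) (y := V)]
    · refine pos_of_norm_sub_lt_one hO (hW t) hV ?_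
      rw [← dist_eq_norm, (hdist t ht).2]; nlinarith [dist_nonneg (x := U) (y := V)]
  refine JoinedIn.ofLine (f := fun t => polarFactor (W t) O (q t)) ?_ ?_ ?_ ?_
  · rw [continuousOn_iff_continuous_domRestrict]
    exact continuous_polarFactor O (by fun_prop) (by fun_prop) fun t => hq t t.2
  · rw [show q 0 = 1 by funext i; simp [q], polarFactor_one hO]
    simp [W]
  · rw [show q 1 = 1 by funext i; simp [q], polarFactor_one hO]
    simp [W]
  · rintro _ ⟨t, ht, rfl⟩
    refine ⟨transpose_mul_polarFactor hO (hq t ht) (hW t), ?_⟩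
    simp only [← dist_eq_norm]
    calc dist U (polarFactor (W t) O (q t))
        ≤ dist U (W t) + dist (W t) (polarFactor (W t) O (q t)) := dist_triangle _ _ _
      _ ≤ dist U (W t) + dist (W t) V := by
        rw [dist_eq_norm (W t), dist_eq_norm (W t)]
        exact add_le_add_right (norm_sub_polarFactor_le hO (hq t ht) (hW t) hV) _
      _ = dist U V := by
        rw [dist_comm U, (hdist t ht).1, (hdist t ht).2]
        ring

end Matrix

theorem stiefel_neighborhood_path_connected
    (n r : ℕ)
    (U : Matrix (Fin n) (Fin r) ℝ) (hU : Uᵀ * U = 1)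
    (δ : ℝ) (hδ0 : 0 < δ) (hδ2 : δ < 2) :
    IsPathConnected {V : Matrix (Fin n) (Fin r) ℝ | Vᵀ * V = 1 ∧ ‖U - V‖ < δ} := by
  refine ⟨U, ⟨hU, by simpa using hδ0⟩, fun V hV => ?_⟩
  exact (joinedIn_stiefel_closedBall hU hV.1 (hV.2.trans hδ2)).mono
    fun X hX => ⟨hX.1, hX.2.trans_lt hV.2⟩
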